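/- Let s ∈ (0,1) and α ∈ [s, 1+s). Let Ω ⊂ ℝⁿ be a convex open set, p, q ∈ ℝⁿ, R > 0 with B_R(p) ∪ B_R(q) ⊆ Ω, and ω ∈ S^{n−1}. Then ∫_R^∞ χ_Ω(p+ρω) χ_Ω(q+ρω) / (d(p+ρω, q+ρω)^{α−s} ρ^{1+2s}) dρ ≤ C R^{−s−α}, with C depending only on α, n, s (and bounded by C'/s with C' independent of s). -/

import Mathlib

/-!
Let `T` be the time at which the ray `ρ ↦ (p + ρω, q + ρω)` leaves `Ω × Ω`. For `ρ < t < T` the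
convex hull of `B_R(p)` and `p + tω` lies in `Ω` and contains `B_{R(1 - ρ/t)}(p + ρω)`, so
`d(p + ρω, q + ρω) ≥ R (1 - ρ/T)`, with `1/T = 0` for an unbounded ray. The integrand is therefore
at most `R^{s-α} (1 - ρ/T)^{s-α} ρ^{-1-2s}`. Where `ρ ≤ T/2` the factor `(1 - ρ/T)^{s-α}` is at
most `2^{α-s}`, and integrating `ρ^{-1-2s}` over `ρ > R` gives `R^{-2s}/(2s)`. Where
`T/2 < ρ < T` the factor `ρ^{-1-2s}` is at most `(T/2)^{-1-2s}`, while `(1 - ρ/T)^{s-α}` is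
integrable since `α - s < 1`; this part contributes `≲ R^{s-α} T^{-2s}/(1 + s - α)`, and
`T ≥ R`.
-/

open Metric MeasureTheory Set Filter Topology Pointwise

section Geometry

variable {E : Type*} [NormedAddCommGroup E] [NormedSpace ℝ E]

theorem Convex.ball_combo_subset {Ω : Set E} (hΩ : Convex ℝ Ω) {x y : E} {r θ : ℝ}
    (hx : ball x r ⊆ Ω) (hy : y ∈ Ω) (hθ0 : 0 ≤ θ) (hθ1 : θ < 1) :
    ball (θ • y + (1 - θ) • x) ((1 - θ) * r) ⊆ Ω := by
  have h1θ : 0 < 1 - θ := sub_pos.mpr hθ1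
  calc ball (θ • y + (1 - θ) • x) ((1 - θ) * r)
      = θ • {y} + (1 - θ) • ball x r := by
        rw [_root_.smul_ball h1θ.ne', Real.norm_of_nonneg h1θ.le, smul_set_singleton,
          singleton_add_ball]
    _ ⊆ θ • Ω + (1 - θ) • Ω := by gcongr; exact singleton_subset_iff.mpr hy
    _ ⊆ Ω := hΩ.set_combo_subset hθ0 h1θ.le (by ring)

theorem Convex.ball_add_smul_subset {Ω : Set E} (hΩ : Convex ℝ Ω) {p ω : E} {R ρ t : ℝ}
    (hp : ball p R ⊆ Ω) (ht : p + t • ω ∈ Ω) (hρ : 0 ≤ ρ) (hρt : ρ < t) :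
    ball (p + ρ • ω) (R * (1 - ρ / t)) ⊆ Ω := by
  have ht0 : 0 < t := hρ.trans_lt hρt
  have hcombo : (ρ / t) • (p + t • ω) + (1 - ρ / t) • p = p + ρ • ω := by
    rw [smul_add, smul_smul, div_mul_cancel₀ ρ ht0.ne']
    module
  rw [← hcombo, mul_comm]
  exact hΩ.ball_combo_subset hp ht (div_nonneg hρ ht0.le) ((div_lt_one ht0).mpr hρt)

end Geometry

/-- `1 / sup S`, which is `0` when `S` is unbounded above: this treats bounded and unbounded
rays alike. -/
noncomputable def invSup (S : Set ℝ) : ℝ := sInf (Inv.inv '' (S ∩ Ioi 0))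

section InvSup

variable {S : Set ℝ}

theorem invSup_nonneg (S : Set ℝ) : 0 ≤ invSup S :=
  Real.sInf_nonneg <| by
    rintro _ ⟨t, ⟨-, ht⟩, rfl⟩
    exact inv_nonneg.mpr ht.le

theorem invSup_le_inv {t : ℝ} (ht : t ∈ S) (ht0 : 0 < t) : invSup S ≤ t⁻¹ :=
  csInf_le ⟨0, by rintro _ ⟨u, ⟨-, hu⟩, rfl⟩; exact inv_nonneg.mpr hu.le⟩
    (⟨t, ⟨ht, ht0⟩, rfl⟩ : t⁻¹ ∈ Inv.inv '' (S ∩ Ioi 0))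

theorem exists_inv_lt_of_invSup_lt {ρ c : ℝ} (hρ : ρ ∈ S) (hρ0 : 0 < ρ) (hc : invSup S < c) :
    ∃ t ∈ S, 0 < t ∧ t⁻¹ < c := by
  obtain ⟨_, ⟨t, ⟨ht, ht0⟩, rfl⟩, htc⟩ :=
    exists_lt_of_csInf_lt (s := Inv.inv '' (S ∩ Ioi 0)) ⟨ρ⁻¹, ρ, ⟨hρ, hρ0⟩, rfl⟩ hc
  exact ⟨t, ht, ht0, htc⟩

theorem invSup_mul_lt_one (hS : IsOpen S) {ρ : ℝ} (hρ : ρ ∈ S) (hρ0 : 0 < ρ) :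
    invSup S * ρ < 1 := by
  have hS' : ∀ᶠ t in 𝓝[>] ρ, t ∈ S := nhdsWithin_le_nhds (hS.mem_nhds hρ)
  obtain ⟨t, ht, hρt⟩ := (hS'.and self_mem_nhdsWithin).exists
  calc invSup S * ρ ≤ t⁻¹ * ρ := by gcongr; exact invSup_le_inv ht (hρ0.trans hρt)
    _ < 1 := (inv_mul_lt_one₀ (hρ0.trans hρt)).mpr hρt

theorem Convex.ball_add_smul_invSup_subset {E : Type*} [NormedAddCommGroup E]
    [NormedSpace ℝ E] {Ω : Set E} (hΩ : Convex ℝ Ω) {p ω : E} {R ρ : ℝ} (hR : 0 < R)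
    (hp : ball p R ⊆ Ω) (hS : ∀ t ∈ S, p + t • ω ∈ Ω) (hρ : ρ ∈ S) (hρ0 : 0 < ρ) :
    ball (p + ρ • ω) (R * (1 - invSup S * ρ)) ⊆ Ω := by
  intro z hz
  set δ := dist z (p + ρ • ω)
  have hiff : ∀ v : ℝ, v < (R - δ) / (R * ρ) ↔ δ < R * (1 - v * ρ) := fun v ↦ by
    rw [lt_div_iff₀ (by positivity)]
    constructor <;> intro h <;> linarith
  obtain ⟨t, ht, ht0, htc⟩ := exists_inv_lt_of_invSup_lt hρ hρ0 ((hiff _).mpr hz)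
  have hzt : δ < R * (1 - t⁻¹ * ρ) := (hiff _).mp htc
  have hρt : ρ < t := by
    have := dist_nonneg.trans_lt hzt
    exact (inv_mul_lt_one₀ ht0).mp (by nlinarith)
  rw [inv_mul_eq_div] at hzt
  exact hΩ.ball_add_smul_subset hp (hS t ht) hρ0.le hρt hzt

end InvSup

theorem le_infDist_frontier {E : Type*} [PseudoMetricSpace E] {Ω : Set E} (hΩ : IsOpen Ω)
    {x : E} {r : ℝ} (hx : ball x r ⊆ Ω) (hne : (frontier Ω).Nonempty) :
    r ≤ infDist x (frontier Ω) :=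
  (le_infDist hne).mpr fun _y hy ↦
    not_lt.mp fun hxy ↦ (hΩ.frontier_eq ▸ hy).2 (hx (mem_ball'.mpr hxy))

theorem indicator_mul_indicator_div_rpow_le {E : Type*} [PseudoMetricSpace E] {Ω : Set E}
    (hΩ : IsOpen Ω) {x y : E} {r β : ℝ} (hr : 0 < r) (hβ : 0 ≤ β)
    (hx : ball x r ⊆ Ω) (hy : ball y r ⊆ Ω) :
    Ω.indicator (fun _ ↦ (1 : ℝ)) x * Ω.indicator (fun _ ↦ (1 : ℝ)) y /
        min (infDist x (frontier Ω)) (infDist y (frontier Ω)) ^ β ≤ r ^ (-β) := by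
  rw [indicator_of_mem (hx (mem_ball_self hr)), indicator_of_mem (hy (mem_ball_self hr)),
    one_mul, Real.rpow_neg hr.le, one_div]
  rcases (frontier Ω).eq_empty_or_nonempty with hF | hF
  · rcases hβ.eq_or_lt with rfl | hβ
    · simp
    · rw [hF, infDist_empty, infDist_empty, min_self, Real.zero_rpow hβ.ne', inv_zero]
      positivity
  · have hm : r ≤ min (infDist x (frontier Ω)) (infDist y (frontier Ω)) :=
      le_min (le_infDist_frontier hΩ hx hF) (le_infDist_frontier hΩ hy hF)
    gcongr

section Majorant

variable {R κ β e ρ : ℝ}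

theorem intervalIntegrable_one_sub_mul_rpow {a b : ℝ} (hβ : β < 1) :
    IntervalIntegrable (fun ρ ↦ (1 - κ * ρ) ^ (-β)) volume a b := by
  rcases eq_or_ne κ 0 with rfl | hκ
  · simp
  have h := ((intervalIntegral.intervalIntegrable_rpow' (a := 1 - κ * a) (b := 1 - κ * b)
    (by linarith : -1 < -β)).comp_sub_left 1).comp_mul_left (c := κ)
  simpa [hκ] using h

theorem integrableOn_Ioo_one_sub_mul_rpow {a b : ℝ} (hβ : β < 1) :
    IntegrableOn (fun ρ ↦ (1 - κ * ρ) ^ (-β)) (Ioo a b) := by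
  rcases le_or_gt b a with hba | hab
  · rw [Ioo_eq_empty (not_lt.mpr hba)]
    exact integrableOn_empty
  · exact (intervalIntegrable_iff_integrableOn_Ioo_of_le hab.le).mp
      (intervalIntegrable_one_sub_mul_rpow hβ)

theorem integral_one_sub_mul_rpow {a : ℝ} (hκ : 0 < κ) (hβ : β < 1) :
    ∫ ρ in a..κ⁻¹, (1 - κ * ρ) ^ (-β) = (1 - κ * a) ^ (1 - β) / (κ * (1 - β)) := by
  rw [intervalIntegral.integral_comp_mul_left (fun x ↦ (1 - x) ^ (-β)) hκ.ne',
    intervalIntegral.integral_comp_sub_left (fun x ↦ x ^ (-β)),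
    integral_rpow (Or.inl (by linarith)), mul_inv_cancel₀ hκ.ne', sub_self,
    Real.zero_rpow (by linarith), smul_eq_mul]
  field_simp
  ring_nf

theorem rpow_mul_integral_Ioo_one_sub_mul_rpow_le (hR : 0 < R) (hκ : 0 ≤ κ) (hβ : β < 1)
    (he : 1 ≤ e) :
    (2 * κ) ^ e * ∫ ρ in Ioo R κ⁻¹, (1 - κ * ρ) ^ (-β) ≤ 2 ^ e / (1 - β) * R ^ (1 - e) := by
  have h1β : 0 < 1 - β := sub_pos.mpr hβ
  rcases le_or_gt κ⁻¹ R with hempty | hRκ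
  · rw [Ioo_eq_empty (not_lt.mpr hempty), Measure.restrict_empty, integral_zero_measure,
      mul_zero]
    positivity
  have hκ0 : 0 < κ := inv_pos.mp (hR.trans hRκ)
  have hκR : κ ≤ R⁻¹ := (le_inv_comm₀ hR hκ0).mp hRκ.le
  have hκR1 : 0 ≤ 1 - κ * R :=
    sub_nonneg.mpr ((lt_div_iff₀' hκ0).mp (by rw [one_div]; exact hRκ)).le
  rw [← integral_Ioc_eq_integral_Ioo, ← intervalIntegral.integral_of_le hRκ.le,
    integral_one_sub_mul_rpow hκ0 hβ]
  calc (2 * κ) ^ e * ((1 - κ * R) ^ (1 - β) / (κ * (1 - β)))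
      ≤ (2 * κ) ^ e * (1 / (κ * (1 - β))) := by
        gcongr
        exact Real.rpow_le_one hκR1 (by nlinarith) h1β.le
    _ = 2 ^ e / (1 - β) * κ ^ (e - 1) := by
        rw [Real.mul_rpow zero_le_two hκ, Real.rpow_sub_one hκ0.ne']
        field_simp
    _ ≤ 2 ^ e / (1 - β) * R ^ (1 - e) := by
        rw [show 1 - e = -(e - 1) by ring, Real.rpow_neg hR.le, ← Real.inv_rpow hR.le]
        gcongr

/-- The two terms bound `(1 - κρ)^(-β) ρ^(-e)` where `κρ ≤ 1/2` and where `κρ > 1/2`. -/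
noncomputable def coneMajorant (R κ β e ρ : ℝ) : ℝ :=
  2 ^ β * ρ ^ (-e) + (2 * κ) ^ e * (Ioo R κ⁻¹).indicator (fun ρ ↦ (1 - κ * ρ) ^ (-β)) ρ

theorem indicator_Ioo_one_sub_mul_rpow_nonneg (hκ : 0 ≤ κ) (R β ρ : ℝ) :
    0 ≤ (Ioo R κ⁻¹).indicator (fun ρ ↦ (1 - κ * ρ) ^ (-β)) ρ := by
  refine indicator_nonneg (fun t ht ↦ Real.rpow_nonneg (sub_nonneg.mpr ?_) _) _
  rcases hκ.eq_or_lt with rfl | hκ0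
  · simp
  · exact ((lt_div_iff₀' hκ0).mp (by rw [one_div]; exact ht.2)).le

theorem coneMajorant_nonneg (hκ : 0 ≤ κ) (hρ : 0 ≤ ρ) : 0 ≤ coneMajorant R κ β e ρ :=
  add_nonneg (by positivity)
    (mul_nonneg (by positivity) (indicator_Ioo_one_sub_mul_rpow_nonneg hκ R β ρ))

theorem one_sub_mul_rpow_mul_rpow_le_coneMajorant (hκ : 0 ≤ κ) (hRρ : R < ρ) (hρ : 0 < ρ)
    (hκρ : κ * ρ < 1) (hβ : 0 ≤ β) (he : 0 ≤ e) :
    (1 - κ * ρ) ^ (-β) * ρ ^ (-e) ≤ coneMajorant R κ β e ρ := by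
  rcases le_or_gt (κ * ρ) (1 / 2) with hnear | hfar
  · have hβ2 : (1 - κ * ρ) ^ (-β) ≤ 2 ^ β := by
      rw [← inv_inv (2 : ℝ), Real.inv_rpow (by norm_num), ← Real.rpow_neg (by norm_num)]
      exact Real.rpow_le_rpow_of_nonpos (by norm_num) (by linarith) (by linarith)
    exact le_add_of_le_of_nonneg (by gcongr)
      (mul_nonneg (by positivity) (indicator_Ioo_one_sub_mul_rpow_nonneg hκ R β ρ))
  · have hκ0 : 0 < κ := by nlinarith
    have hρκ : ρ < κ⁻¹ := by rwa [← one_div, lt_div_iff₀' hκ0]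
    have hρ2κ : ρ ^ (-e) ≤ (2 * κ) ^ e := by
      rw [Real.rpow_neg_eq_inv_rpow]
      gcongr
      rw [inv_le_iff_one_le_mul₀ hρ]
      linarith
    rw [coneMajorant, indicator_of_mem (mem_Ioo.mpr ⟨hRρ, hρκ⟩), mul_comm _ (ρ ^ (-e))]
    exact le_add_of_nonneg_of_le (by positivity) (by gcongr)

theorem setIntegral_Ioi_le_of_le_coneMajorant {f : ℝ → ℝ} {c : ℝ} (hR : 0 < R) (hκ : 0 ≤ κ)
    (hβ : β < 1) (he : 1 < e) (hc : 0 ≤ c) (hf0 : ∀ ρ ∈ Ioi R, 0 ≤ f ρ)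
    (hf : ∀ ρ ∈ Ioi R, f ρ ≤ c * coneMajorant R κ β e ρ) :
    ∫ ρ in Ioi R, f ρ ≤ c * ((2 ^ β / (e - 1) + 2 ^ e / (1 - β)) * R ^ (1 - e)) := by
  have hpow : IntegrableOn (fun ρ : ℝ ↦ ρ ^ (-e)) (Ioi R) :=
    integrableOn_Ioi_rpow_of_lt (by linarith) hR
  have hind : IntegrableOn ((Ioo R κ⁻¹).indicator fun ρ ↦ (1 - κ * ρ) ^ (-β)) (Ioi R) :=
    ((integrableOn_Ioo_one_sub_mul_rpow hβ).integrable_indicator measurableSet_Ioo).integrableOn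
  calc ∫ ρ in Ioi R, f ρ
      ≤ ∫ ρ in Ioi R, c * coneMajorant R κ β e ρ :=
        integral_mono_of_nonneg (ae_restrict_of_forall_mem measurableSet_Ioi hf0)
          (((hpow.const_mul _).add (hind.const_mul _)).const_mul _)
          (ae_restrict_of_forall_mem measurableSet_Ioi hf)
    _ = c * (2 ^ β * (R ^ (1 - e) / (e - 1)) +
          (2 * κ) ^ e * ∫ ρ in Ioo R κ⁻¹, (1 - κ * ρ) ^ (-β)) := by
        unfold coneMajorant
        rw [integral_const_mul, integral_add (hpow.const_mul _) (hind.const_mul _),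
          integral_const_mul, integral_const_mul, integral_Ioi_rpow_of_lt (by linarith) hR,
          setIntegral_indicator measurableSet_Ioo, inter_eq_right.mpr Ioo_subset_Ioi_self,
          show -e + 1 = 1 - e by ring, neg_div, ← div_neg, neg_sub]
    _ ≤ c * (2 ^ β * (R ^ (1 - e) / (e - 1)) + 2 ^ e / (1 - β) * R ^ (1 - e)) := by
        gcongr c * (_ + ?_)
        exact rpow_mul_integral_Ioo_one_sub_mul_rpow_le hR hκ hβ he.le
    _ = c * ((2 ^ β / (e - 1) + 2 ^ e / (1 - β)) * R ^ (1 - e)) := by ring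

end Majorant

section TwoPointIntegrand

variable {E : Type*} [NormedAddCommGroup E] [NormedSpace ℝ E] {Ω : Set E} {p q ω : E}
  {R β e ρ : ℝ}

noncomputable def twoPointIntegrand (Ω : Set E) (p q ω : E) (β e ρ : ℝ) : ℝ :=
  Ω.indicator (fun _ ↦ (1 : ℝ)) (p + ρ • ω) * Ω.indicator (fun _ ↦ (1 : ℝ)) (q + ρ • ω) /
    (min (infDist (p + ρ • ω) (frontier Ω)) (infDist (q + ρ • ω) (frontier Ω)) ^ β * ρ ^ e)

theorem twoPointIntegrand_nonneg (hρ : 0 ≤ ρ) : 0 ≤ twoPointIntegrand Ω p q ω β e ρ :=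
  div_nonneg
    (mul_nonneg (indicator_nonneg (fun _ _ ↦ zero_le_one) _)
      (indicator_nonneg (fun _ _ ↦ zero_le_one) _))
    (mul_nonneg (Real.rpow_nonneg (le_min infDist_nonneg infDist_nonneg) _)
      (Real.rpow_nonneg hρ _))

theorem twoPointIntegrand_le_coneMajorant (hΩc : Convex ℝ Ω) (hΩo : IsOpen Ω) (hR : 0 < R)
    (hp : ball p R ⊆ Ω) (hq : ball q R ⊆ Ω) (hβ : 0 ≤ β) (he : 0 ≤ e) (hRρ : R < ρ) :
    twoPointIntegrand Ω p q ω β e ρ ≤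
      R ^ (-β) * coneMajorant R (invSup {t | p + t • ω ∈ Ω ∧ q + t • ω ∈ Ω}) β e ρ := by
  set S := {t : ℝ | p + t • ω ∈ Ω ∧ q + t • ω ∈ Ω}
  have hρ : 0 < ρ := hR.trans hRρ
  by_cases hρS : ρ ∈ S
  swap
  · have hzero : twoPointIntegrand Ω p q ω β e ρ = 0 := by
      rcases not_and_or.mp hρS with h | h <;> simp [twoPointIntegrand, indicator_of_notMem h]
    rw [hzero]
    exact mul_nonneg (by positivity) (coneMajorant_nonneg (invSup_nonneg S) hρ.le)
  have hSo : IsOpen S := (hΩo.preimage (by fun_prop)).inter (hΩo.preimage (by fun_prop))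
  have hκρ := invSup_mul_lt_one hSo hρS hρ
  have hr : 0 < R * (1 - invSup S * ρ) := mul_pos hR (by linarith)
  have hweight := indicator_mul_indicator_div_rpow_le hΩo hr hβ
    (hΩc.ball_add_smul_invSup_subset hR hp (fun t ht ↦ ht.1) hρS hρ)
    (hΩc.ball_add_smul_invSup_subset hR hq (fun t ht ↦ ht.2) hρS hρ)
  rw [twoPointIntegrand, ← div_div]
  calc _ ≤ (R * (1 - invSup S * ρ)) ^ (-β) / ρ ^ e := by gcongr
    _ = R ^ (-β) * ((1 - invSup S * ρ) ^ (-β) * ρ ^ (-e)) := by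
        rw [Real.mul_rpow hR.le (by linarith), Real.rpow_neg hρ.le]
        ring
    _ ≤ R ^ (-β) * coneMajorant R (invSup S) β e ρ := by
        gcongr
        exact one_sub_mul_rpow_mul_rpow_le_coneMajorant (invSup_nonneg S) hRρ hρ hκρ hβ he

end TwoPointIntegrand

theorem convex_weighted_line_integral_two_points
    (n : ℕ) (s α : ℝ) (hs : s ∈ Set.Ioo (0 : ℝ) 1)
    (hα : α ∈ Set.Ico s (1 + s)) :
    ∃ C > 0, ∀ (Ω : Set (EuclideanSpace ℝ (Fin n)))
      (p q ω : EuclideanSpace ℝ (Fin n)) (R : ℝ),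
      Convex ℝ Ω → IsOpen Ω → 0 < R → ‖ω‖ = 1 →
      Metric.ball p R ∪ Metric.ball q R ⊆ Ω →
      (∫ ρ in Set.Ioi R,
          (Set.indicator Ω (fun _ => (1 : ℝ)) (p + ρ • ω) *
            Set.indicator Ω (fun _ => (1 : ℝ)) (q + ρ • ω)) /
            ((min (Metric.infDist (p + ρ • ω) (frontier Ω))
                  (Metric.infDist (q + ρ • ω) (frontier Ω))) ^ (α - s) *
              ρ ^ (1 + 2 * s)))
        ≤ C * R ^ (-s - α) := by
  obtain ⟨hs0, -⟩ := hs
  obtain ⟨hαs, hα1⟩ := hα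
  refine ⟨2 ^ (α - s) / (2 * s) + 2 ^ (1 + 2 * s) / (1 + s - α),
    add_pos (by positivity) (div_pos (by positivity) (by linarith)), ?_⟩
  intro Ω p q ω R hΩc hΩo hR _ hpq
  change ∫ ρ in Ioi R, twoPointIntegrand Ω p q ω (α - s) (1 + 2 * s) ρ ≤ _
  refine (setIntegral_Ioi_le_of_le_coneMajorant hR (invSup_nonneg _) (by linarith)
    (by linarith) (by positivity) (fun ρ hρ ↦ twoPointIntegrand_nonneg (hR.trans hρ).le)
    (fun ρ hρ ↦ twoPointIntegrand_le_coneMajorant hΩc hΩo hR (subset_union_left.trans hpq)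
      (subset_union_right.trans hpq) (by linarith) (by linarith) hρ)).trans_eq ?_
  rw [mul_comm, mul_assoc, ← Real.rpow_add hR]
  ring_nf
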